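/- arXiv:2601.07079 — 2 statements merged into one kernel-verified Lean document; each statement's English description precedes it below -/
import Mathlib

section
/- Let E(c,P) = {x ∈ ℝⁿ : (x−c)ᵀP⁻¹(x−c) ≤ 1} with P symmetric positive definite. For any symmetric positive definite matrices P₁, P₂ and centers c₁, c₂, and any scalar p > 0, the Minkowski sum E(c₁,P₁) ⊕ E(c₂,P₂) is contained in the ellipsoid E(c₁+c₂, (1+p⁻¹)P₁ + (1+p)P₂). -/
/-!
Put `z = u + v` with `uᵀP₁⁻¹u ≤ 1` and `vᵀP₂⁻¹v ≤ 1`, and `Q = a P₁ + b P₂` with `a = 1 + p⁻¹`,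
`b = 1 + p`. The quadratic form of `Q⁻¹` is the convex conjugate of that of `Q`:
`zᵀQ⁻¹z = max_y (2 yᵀz - yᵀQy)` (complete the square at `y = Q⁻¹z`). For `Q = aP₁ + bP₂` the
function being maximised splits into a `u`-part and a `v`-part, each bounded by the same
conjugacy, so `zᵀQ⁻¹z ≤ a⁻¹ uᵀP₁⁻¹u + b⁻¹ vᵀP₂⁻¹v ≤ a⁻¹ + b⁻¹ = 1`.
-/

open Matrix Pointwise

/-- The ellipsoid set `E(c,P) = {x : (x-c)ᵀ P⁻¹ (x-c) ≤ 1}`. -/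
def ellipsoid {n : ℕ} (c : Fin n → ℝ) (P : Matrix (Fin n) (Fin n) ℝ) : Set (Fin n → ℝ) :=
  {x | (x - c) ⬝ᵥ (P⁻¹ *ᵥ (x - c)) ≤ 1}

namespace Matrix.PosDef

variable {ι : Type*} [Fintype ι] [DecidableEq ι] {P : Matrix ι ι ℝ}

theorem isGreatest_two_mul_dotProduct_sub_dotProduct_mulVec (hP : P.PosDef) (u : ι → ℝ) :
    IsGreatest (Set.range fun y => 2 * (y ⬝ᵥ u) - y ⬝ᵥ P *ᵥ y) (u ⬝ᵥ P⁻¹ *ᵥ u) := by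
  have hsymm : ∀ x y : ι → ℝ, y ⬝ᵥ P *ᵥ x = x ⬝ᵥ P *ᵥ y := fun x y => by
    rw [← dotProduct_transpose_mulVec, (isHermitian_iff_isSymm.mp hP.1).eq]
  have hmul_inv : ∀ y : ι → ℝ, y ⬝ᵥ P *ᵥ (P⁻¹ *ᵥ u) = y ⬝ᵥ u := fun y => by
    rw [mulVec_mulVec, mul_nonsing_inv P ((isUnit_iff_isUnit_det P).mp hP.isUnit), one_mulVec]
  refine ⟨⟨P⁻¹ *ᵥ u, ?_⟩, ?_⟩
  · simp only [hmul_inv, dotProduct_comm (P⁻¹ *ᵥ u) u]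
    ring
  · rintro _ ⟨y, rfl⟩
    have hsq := hP.posSemidef.dotProduct_mulVec_nonneg (y - P⁻¹ *ᵥ u)
    simp only [star_trivial, mulVec_sub, dotProduct_sub, sub_dotProduct, hmul_inv,
      hsymm y (P⁻¹ *ᵥ u), dotProduct_comm (P⁻¹ *ᵥ u) u] at hsq
    linarith

theorem dotProduct_smul_inv_mulVec (hP : P.PosDef) {a : ℝ} (ha : 0 < a) (u : ι → ℝ) :
    u ⬝ᵥ (a • P)⁻¹ *ᵥ u = a⁻¹ * (u ⬝ᵥ P⁻¹ *ᵥ u) := by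
  have := invertibleOfNonzero ha.ne'
  rw [inv_smul P a ((isUnit_iff_isUnit_det P).mp hP.isUnit), smul_mulVec, dotProduct_smul,
    invOf_eq_inv, smul_eq_mul]

end Matrix.PosDef

/-- The Minkowski sum of two ellipsoids is contained in the ellipsoid
`E(c₁+c₂, (1+p⁻¹)P₁ + (1+p)P₂)` for any `p > 0`. -/
theorem minkowski_sum_subset_ellipsoid {n : ℕ}
    (c₁ c₂ : Fin n → ℝ) (P₁ P₂ : Matrix (Fin n) (Fin n) ℝ)
    (hP₁ : P₁.PosDef) (hP₂ : P₂.PosDef) (p : ℝ) (hp : 0 < p) :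
    ellipsoid c₁ P₁ + ellipsoid c₂ P₂ ⊆
      ellipsoid (c₁ + c₂) ((1 + p⁻¹) • P₁ + (1 + p) • P₂) := by
  rintro _ ⟨x₁, hx₁, x₂, hx₂, rfl⟩
  have ha : (0 : ℝ) < 1 + p⁻¹ := by positivity
  have hb : (0 : ℝ) < 1 + p := by positivity
  have hweights : (1 + p⁻¹)⁻¹ + (1 + p)⁻¹ = 1 := by field_simp; ring
  set a := 1 + p⁻¹
  set b := 1 + p
  set u := x₁ - c₁
  set v := x₂ - c₂
  have hQ := (hP₁.smul ha).add (hP₂.smul hb)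
  obtain ⟨y, hy⟩ := (hQ.isGreatest_two_mul_dotProduct_sub_dotProduct_mulVec (u + v)).1
  change (x₁ + x₂ - (c₁ + c₂)) ⬝ᵥ _ ≤ 1
  rw [add_sub_add_comm, ← hy]
  calc 2 * (y ⬝ᵥ (u + v)) - y ⬝ᵥ (a • P₁ + b • P₂) *ᵥ y
      = (2 * (y ⬝ᵥ u) - y ⬝ᵥ (a • P₁) *ᵥ y) + (2 * (y ⬝ᵥ v) - y ⬝ᵥ (b • P₂) *ᵥ y) := by
        rw [add_mulVec, dotProduct_add, dotProduct_add]; ring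
    _ ≤ u ⬝ᵥ (a • P₁)⁻¹ *ᵥ u + v ⬝ᵥ (b • P₂)⁻¹ *ᵥ v :=
        add_le_add
          (((hP₁.smul ha).isGreatest_two_mul_dotProduct_sub_dotProduct_mulVec u).2 ⟨y, rfl⟩)
          (((hP₂.smul hb).isGreatest_two_mul_dotProduct_sub_dotProduct_mulVec v).2 ⟨y, rfl⟩)
    _ = a⁻¹ * (u ⬝ᵥ P₁⁻¹ *ᵥ u) + b⁻¹ * (v ⬝ᵥ P₂⁻¹ *ᵥ v) := by
        rw [hP₁.dotProduct_smul_inv_mulVec ha, hP₂.dotProduct_smul_inv_mulVec hb]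
    _ ≤ a⁻¹ * 1 + b⁻¹ * 1 := by gcongr; exacts [hx₁, hx₂]
    _ = 1 := by rw [mul_one, mul_one, hweights]
end

section
/- Covering the intersection of two ellipsoids (fusion inequality): let Q₁, Q₂ be symmetric positive definite and a₁, a₂ ∈ ℝⁿ. For q > 0 define L = Q₁(Q₁ + q⁻¹Q₂)⁻¹, β = 1 + q − q(a₂−a₁)ᵀ(qQ₁+Q₂)⁻¹(a₂−a₁), a = a₁ + L(a₂−a₁), Q = β(I−L)Q₁. If β > 0, then for every x with (x−a₁)ᵀQ₁⁻¹(x−a₁) ≤ 1 and (x−a₂)ᵀQ₂⁻¹(x−a₂) ≤ 1, it holds that (x−a)ᵀQ⁻¹(x−a) ≤ 1. -/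
/-!
With `R = q⁻¹ Q₂`, the function `f x = (x - a₁)ᵀ Q₁⁻¹ (x - a₁) + (x - a₂)ᵀ R⁻¹ (x - a₂)` is a
quadratic with Hessian `Q₁⁻¹ + R⁻¹ = ((I - L) Q₁)⁻¹`, stationary point `a` and minimum value
`(a₂ - a₁)ᵀ (Q₁ + R)⁻¹ (a₂ - a₁) = 1 + q - β`. Completing the square gives
`f x = (x - a)ᵀ ((I - L) Q₁)⁻¹ (x - a) + 1 + q - β`, and `f x ≤ 1 + q` on both ellipsoids.
-/

open Matrix

namespace Matrix

variable {ι K : Type*} [Fintype ι] [CommRing K]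

theorem IsSymm.dotProduct_mulVec_comm {M : Matrix ι ι K} (hM : M.IsSymm) (v w : ι → K) :
    v ⬝ᵥ (M *ᵥ w) = w ⬝ᵥ (M *ᵥ v) := by
  simpa only [hM.eq] using dotProduct_transpose_mulVec M v w

theorem IsSymm.add_dotProduct_mulVec_add {M : Matrix ι ι K} (hM : M.IsSymm) (v w : ι → K) :
    (v + w) ⬝ᵥ (M *ᵥ (v + w)) = v ⬝ᵥ (M *ᵥ v) + 2 * (v ⬝ᵥ (M *ᵥ w)) + w ⬝ᵥ (M *ᵥ w) := by
  rw [mulVec_add, dotProduct_add, add_dotProduct, add_dotProduct,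
    hM.dotProduct_mulVec_comm w v]
  ring

theorem quadForm_add_quadForm_of_stationary {P₁ P₂ : Matrix ι ι K} (h₁ : P₁.IsSymm)
    (h₂ : P₂.IsSymm) {a₁ a₂ c : ι → K} (hc : P₁ *ᵥ (c - a₁) + P₂ *ᵥ (c - a₂) = 0)
    (x : ι → K) :
    (x - a₁) ⬝ᵥ (P₁ *ᵥ (x - a₁)) + (x - a₂) ⬝ᵥ (P₂ *ᵥ (x - a₂)) =
      (x - c) ⬝ᵥ ((P₁ + P₂) *ᵥ (x - c)) + (a₂ - a₁) ⬝ᵥ (P₂ *ᵥ (a₂ - c)) := by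
  have hP₁ : P₁ *ᵥ (c - a₁) = P₂ *ᵥ (a₂ - c) := by
    rw [← neg_sub c a₂, mulVec_neg, ← add_eq_zero_iff_eq_neg, hc]
  have cross : (x - c) ⬝ᵥ (P₁ *ᵥ (c - a₁)) + (x - c) ⬝ᵥ (P₂ *ᵥ (c - a₂)) = 0 := by
    rw [← dotProduct_add, hc, dotProduct_zero]
  have const : (c - a₁) ⬝ᵥ (P₁ *ᵥ (c - a₁)) + (c - a₂) ⬝ᵥ (P₂ *ᵥ (c - a₂)) =
      (a₂ - a₁) ⬝ᵥ (P₂ *ᵥ (a₂ - c)) := by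
    rw [hP₁, ← neg_sub a₂ c, mulVec_neg, dotProduct_neg, ← sub_eq_add_neg, ← sub_dotProduct]
    congr 1
    abel
  rw [← sub_add_sub_cancel x c a₁, ← sub_add_sub_cancel x c a₂,
    h₁.add_dotProduct_mulVec_add, h₂.add_dotProduct_mulVec_add, add_mulVec, dotProduct_add]
  linear_combination 2 * cross + const

variable [DecidableEq ι] {Q₁ Q₂ : Matrix ι ι K}

theorem one_sub_mul_inv_add (h : IsUnit (Q₁ + Q₂).det) :
    1 - Q₁ * (Q₁ + Q₂)⁻¹ = Q₂ * (Q₁ + Q₂)⁻¹ := by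
  rw [sub_eq_iff_eq_add, ← add_mul, add_comm Q₂, mul_nonsing_inv _ h]

theorem inv_mul_one_sub_mul_inv_add (h₂ : IsUnit Q₂.det) (h : IsUnit (Q₁ + Q₂).det) :
    Q₂⁻¹ * (1 - Q₁ * (Q₁ + Q₂)⁻¹) = (Q₁ + Q₂)⁻¹ := by
  rw [one_sub_mul_inv_add h, nonsing_inv_mul_cancel_left _ _ h₂]

theorem inv_one_sub_mul_inv_add_mul (h₁ : IsUnit Q₁.det) (h₂ : IsUnit Q₂.det)
    (h : IsUnit (Q₁ + Q₂).det) :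
    ((1 - Q₁ * (Q₁ + Q₂)⁻¹) * Q₁)⁻¹ = Q₁⁻¹ + Q₂⁻¹ := by
  refine inv_eq_left_inv ?_
  rw [add_mul, ← mul_assoc Q₂⁻¹, inv_mul_one_sub_mul_inv_add h₂ h, ← mul_assoc, mul_sub,
    mul_one, nonsing_inv_mul_cancel_left _ _ h₁, sub_mul, nonsing_inv_mul _ h₁,
    sub_add_cancel]

theorem quadForm_add_quadForm_eq_fused (hs₁ : Q₁.IsSymm) (hs₂ : Q₂.IsSymm) (h₁ : IsUnit Q₁.det)
    (h₂ : IsUnit Q₂.det) (h : IsUnit (Q₁ + Q₂).det) (a₁ a₂ x : ι → K) :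
    (x - a₁) ⬝ᵥ (Q₁⁻¹ *ᵥ (x - a₁)) + (x - a₂) ⬝ᵥ (Q₂⁻¹ *ᵥ (x - a₂)) =
      (x - (a₁ + (Q₁ * (Q₁ + Q₂)⁻¹) *ᵥ (a₂ - a₁))) ⬝ᵥ
          (((1 - Q₁ * (Q₁ + Q₂)⁻¹) * Q₁)⁻¹ *ᵥ (x - (a₁ + (Q₁ * (Q₁ + Q₂)⁻¹) *ᵥ (a₂ - a₁)))) +
        (a₂ - a₁) ⬝ᵥ ((Q₁ + Q₂)⁻¹ *ᵥ (a₂ - a₁)) := by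
  set L := Q₁ * (Q₁ + Q₂)⁻¹
  set c := a₁ + L *ᵥ (a₂ - a₁)
  have hc₁ : c - a₁ = L *ᵥ (a₂ - a₁) := add_sub_cancel_left _ _
  have hc₂ : a₂ - c = (1 - L) *ᵥ (a₂ - a₁) := by
    rw [sub_mulVec, one_mulVec, ← hc₁]; abel
  have hstat : Q₁⁻¹ *ᵥ (c - a₁) + Q₂⁻¹ *ᵥ (c - a₂) = 0 := by
    rw [hc₁, ← neg_sub a₂, hc₂, mulVec_neg, mulVec_mulVec, mulVec_mulVec,
      inv_mul_one_sub_mul_inv_add h₂ h, nonsing_inv_mul_cancel_left _ _ h₁, add_neg_cancel]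
  rw [quadForm_add_quadForm_of_stationary hs₁.inv hs₂.inv hstat, hc₂, mulVec_mulVec,
    inv_mul_one_sub_mul_inv_add h₂ h, inv_one_sub_mul_inv_add_mul h₁ h₂ h]

end Matrix

theorem Matrix.inv_smul_of_ne_zero {ι K : Type*} [Fintype ι] [DecidableEq ι] [Field K] {c : K}
    (hc : c ≠ 0) (A : Matrix ι ι K) : (c • A)⁻¹ = c⁻¹ • A⁻¹ := by
  by_cases h : IsUnit A.det
  · exact inv_eq_left_inv (by simp [smul_smul, hc, nonsing_inv_mul _ h])
  · have hcA : ¬IsUnit (c • A).det := by simpa [det_smul, hc] using h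
    rw [nonsing_inv_apply_not_isUnit _ h, nonsing_inv_apply_not_isUnit _ hcA, smul_zero]

/-- Covering the intersection of two ellipsoids (fusion inequality): with
`L = Q₁(Q₁ + q⁻¹Q₂)⁻¹`, `β = 1 + q − q(a₂−a₁)ᵀ(qQ₁+Q₂)⁻¹(a₂−a₁)`,
`a = a₁ + L(a₂−a₁)` and `Q = β(I−L)Q₁`, if `β > 0` then every point of the
intersection of `E(a₁,Q₁)` and `E(a₂,Q₂)` lies in `E(a,Q)`. -/
theorem ellipsoid_fusion_inequality {n : ℕ}
    (Q₁ Q₂ : Matrix (Fin n) (Fin n) ℝ) (hQ₁ : Q₁.PosDef) (hQ₂ : Q₂.PosDef)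
    (a₁ a₂ : Fin n → ℝ) (q : ℝ) (hq : 0 < q) :
    letI L : Matrix (Fin n) (Fin n) ℝ := Q₁ * (Q₁ + q⁻¹ • Q₂)⁻¹
    letI β : ℝ := 1 + q - q * ((a₂ - a₁) ⬝ᵥ ((q • Q₁ + Q₂)⁻¹ *ᵥ (a₂ - a₁)))
    letI a : Fin n → ℝ := a₁ + L *ᵥ (a₂ - a₁)
    letI Q : Matrix (Fin n) (Fin n) ℝ := β • ((1 - L) * Q₁)
    0 < β →
      ∀ x : Fin n → ℝ,
        (x - a₁) ⬝ᵥ (Q₁⁻¹ *ᵥ (x - a₁)) ≤ 1 →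
        (x - a₂) ⬝ᵥ (Q₂⁻¹ *ᵥ (x - a₂)) ≤ 1 →
        (x - a) ⬝ᵥ (Q⁻¹ *ᵥ (x - a)) ≤ 1 := by
  intro hβ x h₁ h₂
  have hR : (q⁻¹ • Q₂).PosDef := hQ₂.smul (inv_pos.2 hq)
  have isUnit_det {M : Matrix (Fin n) (Fin n) ℝ} (hM : M.PosDef) : IsUnit M.det :=
    isUnit_iff_ne_zero.2 hM.det_pos.ne'
  have isSymm {M : Matrix (Fin n) (Fin n) ℝ} (hM : M.PosDef) : M.IsSymm :=
    isHermitian_iff_isSymm.1 hM.isHermitian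
  have hβ_eq : q * ((a₂ - a₁) ⬝ᵥ ((q • Q₁ + Q₂)⁻¹ *ᵥ (a₂ - a₁))) =
      (a₂ - a₁) ⬝ᵥ ((Q₁ + q⁻¹ • Q₂)⁻¹ *ᵥ (a₂ - a₁)) := by
    rw [show q • Q₁ + Q₂ = q • (Q₁ + q⁻¹ • Q₂) by rw [smul_add, smul_inv_smul₀ hq.ne'],
      inv_smul_of_ne_zero hq.ne', smul_mulVec, dotProduct_smul, smul_eq_mul,
      mul_inv_cancel_left₀ hq.ne']
  rw [hβ_eq] at hβ ⊢
  have key := quadForm_add_quadForm_eq_fused (isSymm hQ₁) (isSymm hR) (isUnit_det hQ₁)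
    (isUnit_det hR) (isUnit_det (hQ₁.add hR)) a₁ a₂ x
  rw [inv_smul_of_ne_zero (inv_ne_zero hq.ne'), inv_inv, smul_mulVec, dotProduct_smul,
    smul_eq_mul] at key
  rw [inv_smul_of_ne_zero hβ.ne', smul_mulVec, dotProduct_smul, smul_eq_mul, inv_mul_le_one₀ hβ]
  linarith [mul_le_mul_of_nonneg_left h₂ hq.le]
end
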